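/- Define σ₁,σ₂,σ₃,σ₄ ∈ 𝔖₅ acting on the generators X_{ij} of 𝔓₅ by permuting indices, with σ₁=(id), σ₂ sending (1,2,3,4,5) to (5,4,2,3,1), σ₃ sending (1,2,3,4,5) to (1,3,4,2,5), σ₄ sending (1,2,3,4,5) to (4,3,1,2,5). Let φ be a commutator Lie-like series satisfying the 2-cycle relation φ(X,Y)=−φ(Y,X), let P = φ(X₁₂,X₂₃)+φ(X₃₄,X₄₅)+φ(X₅₁,X₁₂)+φ(X₂₃,X₃₄)+φ(X₄₅,X₅₁) ∈ 𝔓₅, and let R(X,Y)=φ(X,Y)+φ(Y,−X−Y)+φ(−X−Y,X). Then Σ_{i=1}^4 σ_i(P) = R(X₂₁,X₂₃)+R(X₂₁,X₂₅)+R(X₂₄,X₂₃)+R(X₂₄,X₂₅) in 𝔓₅. -/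

import Mathlib

open scoped BigOperators

/-- Words in the letters `X = 0`, `Y = 1`, ... -/
abbrev Word (n : ℕ) := List (Fin n)

/-- Coefficient families of non-commutative formal power series `k⟨⟨X₁,…,Xₙ⟩⟩`:
a series is recorded by its coefficient at each word. -/
abbrev NC (k : Type*) (n : ℕ) := Word n → k

/-- The list of shuffles (with multiplicity) of two words. -/
def shuffle {α : Type*} : List α → List α → List (List α)
  | [], v => [v]
  | u, [] => [u]
  | a :: u, b :: v =>
      ((shuffle u (b :: v)).map (a :: ·)) ++ ((shuffle (a :: u) v).map (b :: ·))
  termination_by u v => u.length + v.length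
  decreasing_by all_goals simp +arith +decide

variable {k : Type*}

/-- `φ` is group-like for the coproduct with `X`, `Y` primitive:
`Δφ = φ ⊗ φ` and constant term 1, expressed coefficientwise via shuffles. -/
def IsGroupLike [CommRing k] (φ : NC k 2) : Prop :=
  φ [] = 1 ∧ ∀ u v : Word 2, φ u * φ v = ((shuffle u v).map φ).sum

/-- `φ` is Lie-like (primitive): `Δφ = φ⊗1 + 1⊗φ`, coefficientwise. -/
def IsLieLike [CommRing k] (φ : NC k 2) : Prop :=
  φ [] = 0 ∧ ∀ u v : Word 2, u ≠ [] → v ≠ [] → ((shuffle u v).map φ).sum = 0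

/-- commutator group-like: group-like with vanishing coefficients of `X` and `Y`. -/
def IsCommGroupLike [CommRing k] (φ : NC k 2) : Prop :=
  IsGroupLike φ ∧ φ [0] = 0 ∧ φ [1] = 0

/-- A degree-one element `a·T` of `A[[T]]`, modelling a degree-1 element of a
completed graded algebra. -/
noncomputable def lin {A : Type*} [Ring A] (a : A) : PowerSeries A :=
  PowerSeries.mk fun n => if n = 1 then a else 0

/-- Substitution `φ(X₁, X₂)` of a non-commutative power series `φ` at two
elements (of positive valuation) of a completed graded algebra, where the
completion is modelled by `A[[T]]` (degree `n` part = coefficient of `Tⁿ`). -/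
noncomputable def substPS [CommRing k] {A : Type*} [Ring A] [Algebra k A]
    (φ : NC k 2) (P Q : PowerSeries A) : PowerSeries A :=
  PowerSeries.mk fun n =>
    ∑ m ∈ Finset.range (n + 1), ∑ u : Fin m → Fin 2,
      φ (List.ofFn u) • PowerSeries.coeff (R := A) n (((List.ofFn u).map ![P, Q]).prod)

/-- Exponential of a power series (meaningful when the constant term vanishes). -/
noncomputable def expPS (k : Type*) [Field k] {A : Type*} [Ring A] [Algebra k A]
    (s : PowerSeries A) : PowerSeries A :=
  PowerSeries.mk fun n =>
    ∑ m ∈ Finset.range (n + 1), (Nat.factorial m : k)⁻¹ • PowerSeries.coeff (R := A) n (s ^ m)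

/-- Coefficients of the multiplicative inverse of a power series with
constant term `1`. -/
noncomputable def invCoeff {A : Type*} [Ring A] (s : PowerSeries A) : ℕ → A
  | 0 => 1
  | n + 1 => -∑ j : Fin (n + 1), invCoeff s j.1 * PowerSeries.coeff (R := A) (n + 1 - j.1) s
  termination_by n => n
  decreasing_by exact j.2

/-- Inverse of a power series with constant term `1`. -/
noncomputable def PSInv {A : Type*} [Ring A] (s : PowerSeries A) : PowerSeries A :=
  PowerSeries.mk (invCoeff s)

/-- Relations presenting (the enveloping algebra of) the pure sphere braid Lie
algebra `𝔓₅` on 5 strings. -/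
inductive P5Rel (k : Type*) [CommRing k] :
    FreeAlgebra k (Fin 5 × Fin 5) → FreeAlgebra k (Fin 5 × Fin 5) → Prop
  | diag (i : Fin 5) : P5Rel k (FreeAlgebra.ι k (i, i)) 0
  | symm (i j : Fin 5) : P5Rel k (FreeAlgebra.ι k (i, j)) (FreeAlgebra.ι k (j, i))
  | rowsum (i : Fin 5) : P5Rel k (∑ j : Fin 5, FreeAlgebra.ι k (i, j)) 0
  | disj (i j l m : Fin 5) (h : i ≠ l ∧ i ≠ m ∧ j ≠ l ∧ j ≠ m) :
      P5Rel k (FreeAlgebra.ι k (i, j) * FreeAlgebra.ι k (l, m))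
              (FreeAlgebra.ι k (l, m) * FreeAlgebra.ι k (i, j))

/-- The (graded) enveloping algebra `U𝔓₅` of the pure sphere braid Lie algebra. -/
abbrev P5A (k : Type*) [CommRing k] := RingQuot (P5Rel k)

/-- The generator `X_{ij}` of `U𝔓₅`. -/
noncomputable def Xg (k : Type*) [CommRing k] (i j : Fin 5) : P5A k :=
  RingQuot.mkAlgHom k (P5Rel k) (FreeAlgebra.ι k (i, j))

/-- Relations presenting (the enveloping algebra of) the infinitesimal braid
("chord diagram") Lie algebra `𝔞ₙ`. -/
inductive ARel (k : Type*) [CommRing k] (n : ℕ) :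
    FreeAlgebra k (Fin n × Fin n) → FreeAlgebra k (Fin n × Fin n) → Prop
  | diag (i : Fin n) : ARel k n (FreeAlgebra.ι k (i, i)) 0
  | symm (i j : Fin n) : ARel k n (FreeAlgebra.ι k (i, j)) (FreeAlgebra.ι k (j, i))
  | comm3 (i j l : Fin n) (h : i ≠ j ∧ i ≠ l ∧ j ≠ l) :
      ARel k n (FreeAlgebra.ι k (i, j) * (FreeAlgebra.ι k (i, l) + FreeAlgebra.ι k (j, l)))
               ((FreeAlgebra.ι k (i, l) + FreeAlgebra.ι k (j, l)) * FreeAlgebra.ι k (i, j))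
  | comm4 (i j l m : Fin n)
      (h : i ≠ j ∧ i ≠ l ∧ i ≠ m ∧ j ≠ l ∧ j ≠ m ∧ l ≠ m) :
      ARel k n (FreeAlgebra.ι k (i, j) * FreeAlgebra.ι k (l, m))
               (FreeAlgebra.ι k (l, m) * FreeAlgebra.ι k (i, j))

/-- The (graded) enveloping algebra `U𝔞ₙ`. -/
abbrev AA (k : Type*) [CommRing k] (n : ℕ) := RingQuot (ARel k n)

/-- The generator `t_{ij}` of `U𝔞ₙ`. -/
noncomputable def tg (k : Type*) [CommRing k] (n : ℕ) (i j : Fin n) : AA k n :=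
  RingQuot.mkAlgHom k (ARel k n) (FreeAlgebra.ι k (i, j))

/-- The series `X` (i.e. the image of the first generator) in the model
`(FreeAlgebra k (Fin 2))[[T]]` of `k⟨⟨X,Y⟩⟩`. -/
noncomputable def XF (k : Type*) [CommRing k] : PowerSeries (FreeAlgebra k (Fin 2)) :=
  lin (FreeAlgebra.ι k (0 : Fin 2))

/-- The series `Y`. -/
noncomputable def YF (k : Type*) [CommRing k] : PowerSeries (FreeAlgebra k (Fin 2)) :=
  lin (FreeAlgebra.ι k (1 : Fin 2))

/-- The series `Z = -X-Y`. -/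
noncomputable def ZF (k : Type*) [CommRing k] : PowerSeries (FreeAlgebra k (Fin 2)) :=
  -XF k - YF k

/-- `φ(X_{ab}, X_{bc})` in the completed `U𝔓₅`. -/
noncomputable def S5 (k : Type*) [Field k] (φ : NC k 2) (a b c : Fin 5) :
    PowerSeries (P5A k) :=
  substPS φ (lin (Xg k a b)) (lin (Xg k b c))

/-- The multiplicative 5-cycle relation
`φ(X₁₂,X₂₃)φ(X₃₄,X₄₅)φ(X₅₁,X₁₂)φ(X₂₃,X₃₄)φ(X₄₅,X₅₁) = 1` in the completed `U𝔓₅`. -/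
def FiveCycleMul (k : Type*) [Field k] (φ : NC k 2) : Prop :=
  S5 k φ 0 1 2 * S5 k φ 2 3 4 * S5 k φ 4 0 1 * S5 k φ 1 2 3 * S5 k φ 3 4 0 = 1

/-- `t_{ij}` as a degree-one element of the completed `U𝔞₄`. -/
noncomputable def lt (k : Type*) [Field k] (i j : Fin 4) : PowerSeries (AA k 4) :=
  lin (tg k 4 i j)

/-- Drinfel'd's pentagon equation
`φ(t₁₂,t₂₃+t₂₄)φ(t₁₃+t₂₃,t₃₄) = φ(t₂₃,t₃₄)φ(t₁₂+t₁₃,t₂₄+t₃₄)φ(t₁₂,t₂₃)`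
in the completed `U𝔞₄` (strings are `0,1,2,3`). -/
def Pentagon (k : Type*) [Field k] (φ : NC k 2) : Prop :=
  substPS φ (lt k 0 1) (lt k 1 2 + lt k 1 3) * substPS φ (lt k 0 2 + lt k 1 2) (lt k 2 3) =
    substPS φ (lt k 1 2) (lt k 2 3) *
      substPS φ (lt k 0 1 + lt k 0 2) (lt k 1 3 + lt k 2 3) * substPS φ (lt k 0 1) (lt k 1 2)

/-- The 2-cycle relation `φ(X,Y)φ(Y,X) = 1` in `k⟨⟨X,Y⟩⟩`. -/
def TwoCycleMul (k : Type*) [Field k] (φ : NC k 2) : Prop :=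
  substPS φ (XF k) (YF k) * substPS φ (YF k) (XF k) = 1

/-- The 3-cycle relation
`e^{μX/2}φ(Z,X)e^{μZ/2}φ(Y,Z)e^{μY/2}φ(X,Y) = 1`, `Z = -X-Y`, in `k⟨⟨X,Y⟩⟩`. -/
def ThreeCycleMul (k : Type*) [Field k] (μ : k) (φ : NC k 2) : Prop :=
  expPS k ((μ / 2) • XF k) * substPS φ (ZF k) (XF k) * expPS k ((μ / 2) • ZF k) *
      substPS φ (YF k) (ZF k) * expPS k ((μ / 2) • YF k) * substPS φ (XF k) (YF k) = 1

/-- The special 3-cycle relation `φ(Z,X)φ(Y,Z)φ(X,Y) = 1`, `Z = -X-Y`. -/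
def Special3 (k : Type*) [Field k] (φ : NC k 2) : Prop :=
  substPS φ (ZF k) (XF k) * substPS φ (YF k) (ZF k) * substPS φ (XF k) (YF k) = 1

/-- Drinfel'd's first hexagon equation, for elements `a = t₁₂`, `b = t₁₃`, `c = t₂₃`:
`exp(μ(t₁₃+t₂₃)/2) = φ(t₁₃,t₁₂)exp(μt₁₃/2)φ(t₁₃,t₂₃)⁻¹exp(μt₂₃/2)φ(t₁₂,t₂₃)`. -/
def Hex1 (k : Type*) [Field k] {A : Type*} [Ring A] [Algebra k A]
    (μ : k) (φ : NC k 2) (a b c : A) : Prop :=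
  expPS k ((μ / 2) • (lin b + lin c)) =
    substPS φ (lin b) (lin a) * expPS k ((μ / 2) • lin b) * PSInv (substPS φ (lin b) (lin c)) *
      expPS k ((μ / 2) • lin c) * substPS φ (lin a) (lin c)

/-- Drinfel'd's second hexagon equation, for elements `a = t₁₂`, `b = t₁₃`, `c = t₂₃`:
`exp(μ(t₁₂+t₁₃)/2) = φ(t₂₃,t₁₃)⁻¹exp(μt₁₃/2)φ(t₁₂,t₁₃)exp(μt₁₂/2)φ(t₁₂,t₂₃)⁻¹`. -/
def Hex2 (k : Type*) [Field k] {A : Type*} [Ring A] [Algebra k A]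
    (μ : k) (φ : NC k 2) (a b c : A) : Prop :=
  expPS k ((μ / 2) • (lin a + lin b)) =
    PSInv (substPS φ (lin c) (lin b)) * expPS k ((μ / 2) • lin b) * substPS φ (lin a) (lin b) *
      expPS k ((μ / 2) • lin a) * PSInv (substPS φ (lin a) (lin c))

/-- The "3-cycle defect" `R(A,B) = φ(A,B) + φ(B,-A-B) + φ(-A-B,A)` evaluated
at degree-one elements of the completed `U𝔓₅`. -/
noncomputable def Rdef (k : Type*) [Field k] (φ : NC k 2) (a b : P5A k) :
    PowerSeries (P5A k) :=
  substPS φ (lin a) (lin b) + substPS φ (lin b) (-lin a - lin b) +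
    substPS φ (-lin a - lin b) (lin a)

/-- The 5-cycle sum `P` after permuting the strings by `(a,b,c,d,e)`:
`φ(X_{ab},X_{bc}) + φ(X_{cd},X_{de}) + φ(X_{ea},X_{ab}) + φ(X_{bc},X_{cd}) + φ(X_{de},X_{ea})`. -/
noncomputable def Pt (k : Type*) [Field k] (φ : NC k 2) (a b c d e : Fin 5) :
    PowerSeries (P5A k) :=
  S5 k φ a b c + S5 k φ c d e + S5 k φ e a b + S5 k φ b c d + S5 k φ d e a

/-!
Write `Φ(x, y)` for `substPS φ x y`. The key fact is that a Lie-like `φ` with no linear term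
in `X` satisfies `Φ(a + c, b) = Φ(a, b)` whenever `c` commutes with `a` and `b`: expanding every
letter `a + c` and moving the `c`'s to the front, the coefficient of `cˢ · r(a, b)` is the sum of
`φ` over the shuffles of `Xˢ` with `r`, which vanishes for `s ≥ 1` since `φ` is primitive (for
`r = []` one also needs `φ(Xˢ) = 0`, which follows from `φ(X) = 0` in characteristic zero).
With the 2-cycle relation the same holds in the second variable.

In `𝔓₅`, for distinct `i, j, l` the triangle sum `t = X_{ij} + X_{jl} + X_{li}` equals
`X_{ij} - ∑_{m ∉ {i, j, l}} X_{lm}` and so commutes with its three edges. As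
`-X_{ji} - X_{jl} = X_{li} - t`, each defect `R(X_{ji}, X_{jl})` is the cyclic sum
`Φ(X_{ji}, X_{jl}) + Φ(X_{jl}, X_{li}) + Φ(X_{li}, X_{ji})`. After these four rewrites and the
antisymmetry `Φ(y, x) = -Φ(x, y)`, the twelve terms on the right are exactly the terms of
`∑ σᵢ(P)` left over when four pairs of opposite terms cancel.
-/

theorem shuffle_nil_right {α : Type*} (u : List α) : shuffle u [] = [u] := by
  cases u <;> simp [shuffle]

theorem shuffle_singleton_replicate {α : Type*} (x : α) (s : ℕ) :
    shuffle [x] (List.replicate s x) = List.replicate (s + 1) (List.replicate (s + 1) x) := by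
  induction s with
  | zero => simp [shuffle]
  | succ s ih =>
    rw [List.replicate_succ, shuffle, ih]
    simp [shuffle, List.map_replicate, List.replicate_succ]

section WordSum

open Finset

variable {k A : Type*} [CommRing k] [Ring A] [Algebra k A]

noncomputable def wordSum (f : Word 2 → k) (x y : A) (n : ℕ) : A :=
  ∑ u : Fin n → Fin 2, f (List.ofFn u) • ((List.ofFn u).map ![x, y]).prod

theorem wordSum_zero (f : Word 2 → k) (x y : A) : wordSum f x y 0 = f [] • 1 := by
  simp [wordSum]

theorem wordSum_succ (f : Word 2 → k) (x y : A) (n : ℕ) :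
    wordSum f x y (n + 1) =
      x * wordSum (f ∘ List.cons 0) x y n + y * wordSum (f ∘ List.cons 1) x y n := by
  rw [wordSum, ← (Fin.consEquiv fun _ => Fin 2).sum_comp, Fintype.sum_prod_type,
    Fin.sum_univ_two, wordSum, wordSum, mul_sum, mul_sum]
  simp [Fin.consEquiv, List.ofFn_succ]

theorem wordSum_add (f g : Word 2 → k) (x y : A) (n : ℕ) :
    wordSum (f + g) x y n = wordSum f x y n + wordSum g x y n := by
  simp only [wordSum, Pi.add_apply, add_smul, sum_add_distrib]

theorem wordSum_neg (f : Word 2 → k) (x y : A) (n : ℕ) :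
    wordSum (-f) x y n = -wordSum f x y n := by
  simp only [wordSum, Pi.neg_apply, neg_smul, sum_neg_distrib]

theorem wordSum_swap (f : Word 2 → k) (x y : A) (n : ℕ) :
    wordSum f y x n = wordSum (f ∘ List.map ![1, 0]) x y n := by
  induction n generalizing f with
  | zero => simp [wordSum_zero]
  | succ n ih =>
    rw [wordSum_succ, wordSum_succ, ih, ih, add_comm]
    rfl

def shuffleSum (f : Word 2 → k) (s : ℕ) (r : Word 2) : k :=
  ((shuffle (List.replicate s 0) r).map f).sum

/-- The part of `shuffleSum f s r` coming from the shuffles that start with the first letter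
of `r`. -/
def shuffleSumTail (f : Word 2 → k) (s : ℕ) : Word 2 → k
  | [] => 0
  | x :: r => shuffleSum (f ∘ List.cons x) s r

theorem shuffleSum_zero (f : Word 2 → k) : shuffleSum f 0 = f := by
  funext r
  simp [shuffleSum, shuffle]

theorem shuffleSum_succ (f : Word 2 → k) (s : ℕ) :
    shuffleSum f (s + 1) = shuffleSum (f ∘ List.cons 0) s + shuffleSumTail f (s + 1) := by
  funext r
  cases r with
  | nil => simp [shuffleSum, shuffleSumTail, shuffle_nil_right, List.replicate_succ]
  | cons x r => simp [shuffleSum, shuffleSumTail, List.replicate_succ, shuffle, Function.comp_def]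

theorem wordSum_shuffleSumTail_zero (f : Word 2 → k) (s : ℕ) (x y : A) :
    wordSum (shuffleSumTail f s) x y 0 = 0 := by
  simp [wordSum_zero, shuffleSumTail]

theorem wordSum_shuffleSumTail_succ (f : Word 2 → k) (s : ℕ) (x y : A) (n : ℕ) :
    wordSum (shuffleSumTail f s) x y (n + 1) =
      x * wordSum (shuffleSum (f ∘ List.cons 0) s) x y n +
        y * wordSum (shuffleSum (f ∘ List.cons 1) s) x y n :=
  wordSum_succ _ x y n

theorem wordSum_shuffleSumTail_zero_succ (f : Word 2 → k) (x y : A) (n : ℕ) :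
    wordSum (shuffleSumTail f 0) x y (n + 1) = wordSum f x y (n + 1) := by
  rw [wordSum_shuffleSumTail_succ, wordSum_succ, shuffleSum_zero, shuffleSum_zero]

theorem wordSum_add_eq_sum_antidiagonal {a b c : A} (hca : Commute c a) (hcb : Commute c b)
    (f : Word 2 → k) (n : ℕ) :
    wordSum f (a + c) b n =
      ∑ p ∈ antidiagonal n, c ^ p.1 * wordSum (shuffleSum f p.1) a b p.2 := by
  induction n generalizing f with
  | zero => simp [shuffleSum_zero, wordSum_zero]
  | succ n ih =>
    set E := fun g : Word 2 → k =>
      ∑ p ∈ antidiagonal n, c ^ p.1 * wordSum (shuffleSum g p.1) a b p.2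
    set G := fun p : ℕ × ℕ => c ^ p.1 * wordSum (shuffleSumTail f p.1) a b p.2
    have hG : ∑ p ∈ antidiagonal (n + 1), G p =
        a * E (f ∘ List.cons 0) + b * E (f ∘ List.cons 1) := by
      rw [Nat.sum_antidiagonal_succ']
      simp only [G, E, wordSum_shuffleSumTail_zero, mul_zero, zero_add,
        wordSum_shuffleSumTail_succ, mul_add, mul_sum, sum_add_distrib, ← mul_assoc,
        (hca.pow_left _).eq, (hcb.pow_left _).eq]
    calc wordSum f (a + c) b (n + 1)
        = (a + c) * E (f ∘ List.cons 0) + b * E (f ∘ List.cons 1) := by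
          rw [wordSum_succ, ih, ih]
      _ = c * E (f ∘ List.cons 0) + ∑ p ∈ antidiagonal (n + 1), G p := by
          rw [hG]; noncomm_ring
      _ = _ := by
          rw [Nat.sum_antidiagonal_succ, Nat.sum_antidiagonal_succ]
          simp only [G, E, pow_zero, one_mul, shuffleSum_zero, wordSum_shuffleSumTail_zero_succ,
            shuffleSum_succ, wordSum_add, mul_add, mul_sum, sum_add_distrib, pow_succ', mul_assoc]
          abel

end WordSum

section Substitution

variable {k A : Type*} [CommRing k] [Ring A] [Algebra k A] {φ : NC k 2}

theorem substPS_eq_mk (P Q : PowerSeries A) :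
    substPS φ P Q =
      PowerSeries.mk fun n => ∑ m ∈ Finset.range (n + 1), PowerSeries.coeff n (wordSum φ P Q m) := by
  simp [substPS, wordSum, map_sum]

theorem substPS_swap (h2 : ∀ w : Word 2, φ (w.map ![1, 0]) = -φ w) (P Q : PowerSeries A) :
    substPS φ P Q = -substPS φ Q P := by
  have hφ : φ ∘ List.map ![1, 0] = -φ := funext h2
  ext n
  simp [substPS_eq_mk, wordSum_swap φ P Q, hφ, wordSum_neg]

theorem lin_eq_monomial (a : A) : lin a = PowerSeries.monomial 1 a := by
  ext n
  simp [lin, PowerSeries.coeff_monomial]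

theorem Commute.lin {a b : A} (h : Commute a b) : Commute (lin a) (lin b) := by
  simp only [Commute, SemiconjBy, lin_eq_monomial, PowerSeries.monomial_mul_monomial, h.eq]

end Substitution

section LieLike

variable {k A : Type*} [Field k] [CharZero k] [Ring A] [Algebra k A] {φ : NC k 2}

theorem IsLieLike.apply_replicate (hφ : IsLieLike φ) (h0 : φ [0] = 0) (s : ℕ) :
    φ (List.replicate (s + 1) 0) = 0 := by
  cases s with
  | zero => exact h0
  | succ s =>
    have h := hφ.2 [0] (List.replicate (s + 1) 0) (by simp) (by simp)
    rw [shuffle_singleton_replicate, List.map_replicate, List.sum_replicate, nsmul_eq_mul] at h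
    exact (mul_eq_zero.mp h).resolve_left (Nat.cast_ne_zero.mpr (Nat.succ_ne_zero _))

theorem IsLieLike.shuffleSum_succ_eq_zero (hφ : IsLieLike φ) (h0 : φ [0] = 0) (s : ℕ) :
    shuffleSum φ (s + 1) = 0 := by
  funext r
  cases r with
  | nil => simpa [shuffleSum, shuffle_nil_right] using hφ.apply_replicate h0 s
  | cons x r => exact hφ.2 _ _ (by simp) (by simp)

theorem IsLieLike.wordSum_add_of_commute (hφ : IsLieLike φ) (h0 : φ [0] = 0) {a b c : A}
    (hca : Commute c a) (hcb : Commute c b) (n : ℕ) :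
    wordSum φ (a + c) b n = wordSum φ a b n := by
  rw [wordSum_add_eq_sum_antidiagonal hca hcb, Finset.Nat.sum_antidiagonal_eq_sum_range_succ_mk,
    Finset.sum_range_succ']
  simp [hφ.shuffleSum_succ_eq_zero h0, wordSum, shuffleSum_zero]

theorem IsLieLike.substPS_add_left (hφ : IsLieLike φ) (h0 : φ [0] = 0) {P Q C : PowerSeries A}
    (hP : Commute C P) (hQ : Commute C Q) : substPS φ (P + C) Q = substPS φ P Q := by
  simp only [substPS_eq_mk, hφ.wordSum_add_of_commute h0 hP hQ]

theorem IsLieLike.substPS_add_right (hφ : IsLieLike φ) (h0 : φ [0] = 0)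
    (h2 : ∀ w : Word 2, φ (w.map ![1, 0]) = -φ w) {P Q C : PowerSeries A}
    (hP : Commute C P) (hQ : Commute C Q) : substPS φ P (Q + C) = substPS φ P Q := by
  rw [substPS_swap h2, hφ.substPS_add_left h0 hQ hP, ← substPS_swap h2]

theorem IsLieLike.defect_eq_of_commute (hφ : IsLieLike φ) (h0 : φ [0] = 0)
    (h2 : ∀ w : Word 2, φ (w.map ![1, 0]) = -φ w) {a b c : A}
    (ha : Commute a (b + c)) (hb : Commute b (c + a)) (hc : Commute c (a + b)) :
    substPS φ (lin a) (lin b) + substPS φ (lin b) (-lin a - lin b) +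
        substPS φ (-lin a - lin b) (lin a) =
      substPS φ (lin a) (lin b) + substPS φ (lin b) (lin c) + substPS φ (lin c) (lin a) := by
  have hsum : -lin a - lin b = lin c + -lin (a + b + c) := by
    simp only [lin_eq_monomial, map_add]; abel
  have central : ∀ {x}, Commute x (a + b + c) → Commute (-lin (a + b + c)) (lin x) :=
    fun h => h.symm.lin.neg_left
  have ta : Commute a (a + b + c) := by
    rw [show a + b + c = a + (b + c) by abel]; exact (Commute.refl a).add_right ha
  have tb : Commute b (a + b + c) := by
    rw [show a + b + c = b + (c + a) by abel]; exact (Commute.refl b).add_right hb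
  have tc : Commute c (a + b + c) := by
    rw [show a + b + c = c + (a + b) by abel]; exact (Commute.refl c).add_right hc
  rw [hsum, hφ.substPS_add_right h0 h2 (central tb) (central tc),
    hφ.substPS_add_left h0 (central tc) (central ta)]

end LieLike

section SphereBraid

variable (k : Type*) [CommRing k]

theorem Xg_symm (i j : Fin 5) : Xg k i j = Xg k j i :=
  RingQuot.mkAlgHom_rel k (P5Rel.symm i j)

theorem Xg_self (i : Fin 5) : Xg k i i = 0 := by
  simpa only [Xg, map_zero] using RingQuot.mkAlgHom_rel k (P5Rel.diag (k := k) i)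

theorem sum_Xg (i : Fin 5) : ∑ j, Xg k i j = 0 := by
  simpa only [Xg, map_sum, map_zero] using RingQuot.mkAlgHom_rel k (P5Rel.rowsum (k := k) i)

theorem Xg_commute {i j l m : Fin 5} (hil : i ≠ l) (him : i ≠ m) (hjl : j ≠ l) (hjm : j ≠ m) :
    Commute (Xg k i j) (Xg k l m) := by
  simpa only [Xg, map_mul, Commute, SemiconjBy] using
    RingQuot.mkAlgHom_rel k (P5Rel.disj (k := k) i j l m ⟨hil, him, hjl, hjm⟩)

theorem commute_Xg_add_Xg {i j l : Fin 5} (hij : i ≠ j) (hil : i ≠ l) (hjl : j ≠ l) :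
    Commute (Xg k i j) (Xg k i l + Xg k j l) := by
  have hrow : Xg k i l + Xg k j l = -∑ m ∈ (Finset.univ.erase i).erase j, Xg k l m := by
    rw [eq_neg_iff_add_eq_zero, Xg_symm k i l, Xg_symm k j l, add_assoc,
      Finset.add_sum_erase _ _ (by simp [hij.symm]), Finset.add_sum_erase _ _ (by simp),
      sum_Xg]
  rw [hrow]
  refine (Commute.sum_right _ _ _ fun m hm => ?_).neg_right
  obtain ⟨hmj, hmi⟩ : m ≠ j ∧ m ≠ i := by simpa using hm
  rcases eq_or_ne m l with rfl | hml
  · rw [Xg_self]; exact Commute.zero_right _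
  · exact Xg_commute k hil (Ne.symm hmi) hjl (Ne.symm hmj)

end SphereBraid

theorem IsLieLike.Rdef_Xg {k : Type*} [Field k] [CharZero k] {φ : NC k 2} (hφ : IsLieLike φ)
    (h0 : φ [0] = 0) (h2 : ∀ w : Word 2, φ (w.map ![1, 0]) = -φ w) {i j l : Fin 5}
    (hij : i ≠ j) (hil : i ≠ l) (hjl : j ≠ l) :
    Rdef k φ (Xg k j i) (Xg k j l) =
      substPS φ (lin (Xg k j i)) (lin (Xg k j l)) + substPS φ (lin (Xg k j l)) (lin (Xg k l i)) +
        substPS φ (lin (Xg k l i)) (lin (Xg k j i)) := by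
  refine hφ.defect_eq_of_commute h0 h2 ?_ ?_ ?_
  · rw [Xg_symm k l i]; exact commute_Xg_add_Xg k hij.symm hjl hil
  · rw [add_comm]; exact commute_Xg_add_Xg k hjl hij.symm hil.symm
  · rw [Xg_symm k j i, Xg_symm k j l, add_comm]; exact commute_Xg_add_Xg k hil.symm hjl.symm hij

/-- With `σ₁ = id`, `σ₂(12345) = (54231)`, `σ₃(12345) = (13425)`,
`σ₄(12345) = (43125)`, and `φ` commutator Lie-like satisfying the 2-cycle
relation, one has
`Σ_{i=1}^4 σᵢ(P) = R(X₂₁,X₂₃) + R(X₂₁,X₂₅) + R(X₂₄,X₂₃) + R(X₂₄,X₂₅)`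
in `𝔓₅` (strings `1,…,5` indexed by `0,…,4`). -/
theorem statement13 (k : Type*) [Field k] [CharZero k] (φ : NC k 2)
    (hLie : IsLieLike φ) (hcomm : φ [0] = 0 ∧ φ [1] = 0)
    (h2 : ∀ w : Word 2, φ (w.map ![1, 0]) = -φ w) :
    Pt k φ 0 1 2 3 4 + Pt k φ 4 3 1 2 0 + Pt k φ 0 2 3 1 4 + Pt k φ 3 2 0 1 4 =
      Rdef k φ (Xg k 1 0) (Xg k 1 2) + Rdef k φ (Xg k 1 0) (Xg k 1 4) +
        Rdef k φ (Xg k 1 3) (Xg k 1 2) + Rdef k φ (Xg k 1 3) (Xg k 1 4) := by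
  obtain ⟨h0, -⟩ := hcomm
  rw [hLie.Rdef_Xg h0 h2 (i := 0) (l := 2) (by decide) (by decide) (by decide),
    hLie.Rdef_Xg h0 h2 (i := 0) (l := 4) (by decide) (by decide) (by decide),
    hLie.Rdef_Xg h0 h2 (i := 3) (l := 2) (by decide) (by decide) (by decide),
    hLie.Rdef_Xg h0 h2 (i := 3) (l := 4) (by decide) (by decide) (by decide)]
  simp only [Pt, S5, Xg_symm k 1 0, Xg_symm k 2 0, Xg_symm k 3 1, Xg_symm k 4 0, Xg_symm k 3 2,
    Xg_symm k 4 3]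
  rw [substPS_swap h2 (lin (Xg k 3 4)) (lin (Xg k 2 3)),
    substPS_swap h2 (lin (Xg k 0 4)) (lin (Xg k 3 4)),
    substPS_swap h2 (lin (Xg k 0 4)) (lin (Xg k 0 2)),
    substPS_swap h2 (lin (Xg k 2 3)) (lin (Xg k 0 2))]
  abel
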